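/- For every nonnegative integer n and every real x, the n-th derivative of tanh at x equals (-1)^{(n-1)/2} T(n,1) + Σ_{k=1}^{n+1} ((-1)^{(n+k-1)/2} / k) T(n+1,k) tanh^k(x), where in each term the sign factor is interpreted via the convention that T(m,j) = 0 when m + j is odd (so all surviving terms have integer exponents of -1). -/

import Mathlib

noncomputable def T (n k : ℕ) : ℝ :=
  iteratedDeriv n (fun t : ℝ => Real.tan t ^ k) 0

/-!
Since `tanh' = 1 - tanh ^ 2`, the `n`-th derivative of `tanh` is `P_n (tanh x)` for the
polynomials `P_0 = X`, `P_(n+1) = P_n' * (1 - X ^ 2)`, whose coefficients therefore obey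
`a_(n+1,j) = (j + 1) a_(n,j+1) - (j - 1) a_(n,j-1)`. Taking `n` more derivatives at `0` of
`(tan ^ k)' = k tan ^ (k-1) (1 + tan ^ 2)` gives `T (n+1) k = k (T n (k-1) + T n (k+1))`, and
with the signs `(-1) ^ ((n + k - 1) / 2)` the claimed coefficients satisfy the same recurrence
and start from `X`.
-/

open Real Polynomial

theorem Real.hasDerivAt_tanh (x : ℝ) : HasDerivAt tanh (1 - tanh x ^ 2) x := by
  have h := (hasDerivAt_sinh x).div (hasDerivAt_cosh x) (cosh_pos x).ne'
  rw [show sinh / cosh = tanh from funext fun y => (tanh_eq_sinh_div_cosh y).symm] at h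
  refine h.congr_deriv ?_
  rw [tanh_eq_sinh_div_cosh]
  field_simp

theorem Real.hasDerivAt_tan_pow {x : ℝ} (hx : cos x ≠ 0) (k : ℕ) :
    HasDerivAt (fun t => tan t ^ k) (k * (tan x ^ (k - 1) + tan x ^ (k + 1))) x := by
  refine ((hasDerivAt_tan hx).pow k).congr_deriv ?_
  rw [one_div, ← inv_one_add_tan_sq hx, inv_inv]
  rcases k with _ | k
  · simp
  · simp only [add_tsub_cancel_right]
    ring

theorem T_succ (n k : ℕ) : T (n + 1) k = k * (T n (k - 1) + T n (k + 1)) := by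
  have hcos : ∀ᶠ t in nhds (0 : ℝ), cos t ≠ 0 :=
    continuous_cos.continuousAt.eventually_ne (by simp)
  have hderiv : deriv (fun t => tan t ^ k) =ᶠ[nhds 0]
      fun t => (k : ℝ) * (tan t ^ (k - 1) + tan t ^ (k + 1)) :=
    hcos.mono fun t ht => (hasDerivAt_tan_pow ht k).deriv
  have hsmooth : ∀ j, ContDiffAt ℝ n (fun t => tan t ^ j) 0 := fun j =>
    (contDiffAt_tan.2 (by simp)).pow j
  rw [T, iteratedDeriv_succ', (hderiv.iteratedDeriv n).eq_of_nhds, iteratedDeriv_const_mul_field,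
    iteratedDeriv_fun_add (hsmooth _) (hsmooth _)]
  rfl

theorem T_succ_zero (n : ℕ) : T (n + 1) 0 = 0 := by
  simp [T_succ]

theorem T_eq_zero_of_lt {n k : ℕ} (h : n < k) : T n k = 0 := by
  induction n generalizing k with
  | zero => simp [T, Nat.pos_iff_ne_zero.1 h]
  | succ n ih => rw [T_succ, ih (by omega), ih (by omega), add_zero, mul_zero]

theorem T_one_one : T 1 1 = 1 := by
  simp [T, deriv_tan]

theorem Polynomial.coeff_derivative_mul_one_sub_X_sq {R : Type*} [CommRing R] (p : R[X]) (j : ℕ) :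
    (derivative p * (1 - X ^ 2)).coeff j
      = (j + 1) * p.coeff (j + 1) - ((j - 1 : ℕ) : R) * p.coeff (j - 1) := by
  rw [mul_sub, mul_one, coeff_sub, coeff_derivative, coeff_mul_X_pow']
  rcases j with _ | _ | j
  · simp
  · simp [mul_comm]
  · simp [coeff_derivative, mul_comm]

noncomputable def tanhPoly : ℕ → ℝ[X]
  | 0 => X
  | n + 1 => derivative (tanhPoly n) * (1 - X ^ 2)

theorem iteratedDeriv_tanh_eq_eval (n : ℕ) (x : ℝ) :
    iteratedDeriv n tanh x = (tanhPoly n).eval (tanh x) := by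
  induction n generalizing x with
  | zero => simp [tanhPoly]
  | succ n ih =>
    rw [iteratedDeriv_succ, funext ih]
    refine (((tanhPoly n).hasDerivAt (tanh x)).comp x (hasDerivAt_tanh x)).deriv.trans ?_
    simp [tanhPoly]

/-- The coefficient of `tanh x ^ k` in `deriv_tanh_closed`, indexed by `k + 1` for `k ≥ 1`. -/
noncomputable def tanhCoeff (n : ℕ) : ℕ → ℝ
  | 0 => (-1) ^ ((n - 1) / 2) * T n 1
  | k + 1 => (-1) ^ ((n + k) / 2) / (k + 1 : ℕ) * T (n + 1) (k + 1)

theorem tanhCoeff_succ (n j : ℕ) :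
    tanhCoeff (n + 1) j
      = (j + 1) * tanhCoeff n (j + 1) - ((j - 1 : ℕ) : ℝ) * tanhCoeff n (j - 1) := by
  rcases j with _ | _ | j
  · simp [tanhCoeff]
  · simp only [tanhCoeff, T_succ (n + 1) 1, Nat.sub_self, T_succ_zero]
    push_cast
    ring
  · have hsign : (n + 1 + (j + 1)) / 2 = (n + j) / 2 + 1 := by omega
    have hsign' : (n + (j + 2)) / 2 = (n + j) / 2 + 1 := by omega
    simp only [tanhCoeff, hsign, hsign', T_succ (n + 1) (j + 2), pow_succ]
    push_cast
    field_simp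
    ring

theorem tanhCoeff_eq_zero_of_add_two_le {n k : ℕ} (h : n + 2 ≤ k) : tanhCoeff n k = 0 := by
  obtain ⟨k, rfl⟩ : ∃ m, k = m + 1 := ⟨k - 1, by omega⟩
  simp [tanhCoeff, T_eq_zero_of_lt (show n + 1 < k + 1 by omega)]

theorem coeff_tanhPoly (n k : ℕ) : (tanhPoly n).coeff k = tanhCoeff n k := by
  induction n generalizing k with
  | zero =>
    rcases k with _ | _ | k
    · simp [tanhPoly, tanhCoeff, T]
    · simp [tanhPoly, tanhCoeff, T_one_one]
    · simp [tanhPoly, tanhCoeff, coeff_X, T_eq_zero_of_lt (show 1 < k + 2 by omega)]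
  | succ n ih => rw [tanhPoly, coeff_derivative_mul_one_sub_X_sq, ih, ih, tanhCoeff_succ]

theorem natDegree_tanhPoly_lt (n : ℕ) : (tanhPoly n).natDegree < n + 2 :=
  Nat.lt_succ_of_le <| natDegree_le_iff_coeff_eq_zero.2 fun k hk => by
    rw [coeff_tanhPoly, tanhCoeff_eq_zero_of_add_two_le hk]

theorem deriv_tanh_closed (n : ℕ) (x : ℝ) :
    iteratedDeriv n Real.tanh x
      = (-1 : ℝ) ^ ((n - 1) / 2) * T n 1
        + ∑ k ∈ Finset.Icc 1 (n + 1),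
            ((-1 : ℝ) ^ ((n + k - 1) / 2) / (k : ℝ)) * T (n + 1) k
              * Real.tanh x ^ k := by
  rw [iteratedDeriv_tanh_eq_eval, eval_eq_sum_range' (natDegree_tanhPoly_lt n),
    Finset.sum_range_succ', add_comm, ← Finset.Ico_add_one_right_eq_Icc,
    Finset.sum_Ico_eq_sum_range]
  simp only [coeff_tanhPoly]
  congr 1
  · rw [tanhCoeff, pow_zero, mul_one]
  · refine Finset.sum_congr rfl fun i _ => ?_
    rw [add_comm 1 i, tanhCoeff, Nat.add_succ_sub_one]
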